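/- arXiv:1502.05953 — 8 statements merged into one kernel-verified Lean document; each statement's English description precedes it below -/
import Mathlib

section
/- Let K be a field, and let b₁(x), b₂(x) ∈ K[x] be nonconstant polynomials, and let l, m be positive integers. Then y^l - b₁(x) divides y^m - b₂(x) in K[x,y] if and only if l divides m and b₂(x) = b₁(x)^(m/l). -/
/-!
Modulo the monic polynomial `X ^ l - C a` one has `X ^ l ≡ C a`, so writing `m = l * q + r`
with `r < l` gives `X ^ m - C b ≡ C (a ^ q) * X ^ r - C b`. The right-hand side has degree `< l`,
so it is the remainder, and divisibility means that it vanishes. Since `a ^ q ≠ 0`, the monomial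
`C (a ^ q) * X ^ r` is constant only for `r = 0`, and then `b = a ^ q`.
-/

open Polynomial

namespace Polynomial

variable {R : Type*} [CommRing R]

theorem X_pow_sub_C_dvd_X_pow_sub_C_pow_mul_X_pow (a : R) {l : ℕ} (m : ℕ) :
    X ^ l - C a ∣ X ^ m - C a ^ (m / l) * X ^ (m % l) := by
  nth_rewrite 1 [← Nat.div_add_mod m l]
  rw [pow_add, pow_mul, ← sub_mul]
  exact (sub_dvd_pow_sub_pow _ _ _).mul_right _

theorem X_pow_sub_C_modByMonic_X_pow_sub_C [Nontrivial R] (a b : R) {l : ℕ} (hl : 0 < l)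
    (m : ℕ) :
    (X ^ m - C b) %ₘ (X ^ l - C a) = C (a ^ (m / l)) * X ^ (m % l) - C b := by
  have hmonic := monic_X_pow_sub_C a hl.ne'
  rw [modByMonic_eq_of_dvd_sub hmonic (p₂ := C (a ^ (m / l)) * X ^ (m % l) - C b) (by
      rw [sub_sub_sub_cancel_right, map_pow]
      exact X_pow_sub_C_dvd_X_pow_sub_C_pow_mul_X_pow a m),
    modByMonic_eq_self_iff hmonic, degree_X_pow_sub_C hl]
  refine (degree_sub_le _ _).trans_lt (max_lt ?_ (degree_C_le.trans_lt (by exact_mod_cast hl)))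
  exact (degree_C_mul_X_pow_le _ _).trans_lt (by exact_mod_cast Nat.mod_lt m hl)

theorem X_pow_sub_C_dvd_X_pow_sub_C_iff [IsDomain R] {a : R} (ha : a ≠ 0) (b : R) {l : ℕ}
    (hl : 0 < l) (m : ℕ) :
    X ^ l - C a ∣ X ^ m - C b ↔ l ∣ m ∧ b = a ^ (m / l) := by
  rw [← modByMonic_eq_zero_iff_dvd (monic_X_pow_sub_C a hl.ne'),
    X_pow_sub_C_modByMonic_X_pow_sub_C a b hl, sub_eq_zero, C_mul_X_pow_eq_monomial,
    ← monomial_zero_left, monomial_eq_monomial_iff, Nat.dvd_iff_mod_eq_zero]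
  simp [pow_ne_zero _ ha, eq_comm]

end Polynomial

theorem stmt_0_general {K : Type*} [Field K] (b₁ b₂ : Polynomial K)
    (h₁ : 0 < b₁.natDegree)
    (l m : ℕ) (hl : 0 < l) :
    ((X : Polynomial (Polynomial K)) ^ l - C b₁ ∣ X ^ m - C b₂) ↔
      l ∣ m ∧ b₂ = b₁ ^ (m / l) :=
  X_pow_sub_C_dvd_X_pow_sub_C_iff (ne_zero_of_natDegree_gt h₁) b₂ hl m

theorem stmt_0 {K : Type*} [Field K] (b₁ b₂ : Polynomial K)
    (h₁ : 0 < b₁.natDegree) (h₂ : 0 < b₂.natDegree)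
    (l m : ℕ) (hl : 0 < l) (hm : 0 < m) :
    ((X : Polynomial (Polynomial K)) ^ l - C b₁ ∣ X ^ m - C b₂) ↔
      l ∣ m ∧ b₂ = b₁ ^ (m / l) :=
  stmt_0_general b₁ b₂ h₁ l m hl
end

section
/- Let p > 2 be prime, q = p^h, and n a positive integer with n > 3. If n divides n + 3(q-1) and (1/b - (a/b)x^n)^{3(q-1)/n + 1} = 1/b - (a/b)x^{n+3(q-1)} holds in 𝔽_q[x] for some a, b ∈ 𝔽_q with ab ≠ 0, then 3(q-1)/n + 1 = p^r for some positive integer r, and a, b ∈ 𝔽_{p^r}. -/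
/-!
Put `u = 1/b`, `w = -a/b` and `m = 3(q-1)/n + 1 ≥ 2`. Since `expand n` is injective, the
hypothesis is equivalent to `(u + wX)^m = u + wX^m`. Comparing coefficients, every middle binomial
coefficient `C(m, k)` vanishes in `F`, i.e. is divisible by `p`, and by Lucas's theorem this forces
`m = p^r`. The extreme coefficients give `u^m = u` and `w^m = w`, so `u` and `w`, hence `a` and `b`,
are fixed by the Frobenius power `x ↦ x^(p^r)`.
-/

open Polynomial

section
variable {R : Type*} [CommRing R]

theorem coeff_C_add_C_mul_X_pow (u w : R) (m k : ℕ) :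
    ((C u + C w * X) ^ m).coeff k = m.choose k * u ^ (m - k) * w ^ k := by
  rw [add_comm, add_pow, finsetSum_coeff]
  simp only [mul_pow, ← C_pow, ← C_eq_natCast, mul_comm _ (X ^ _), mul_assoc, ← C_mul,
    coeff_X_pow_mul', coeff_C]
  rw [Finset.sum_eq_single k]
  · simp only [le_refl, if_true, Nat.sub_self]
    ring
  · intro j _ hjk
    split_ifs <;> first | rfl | omega
  · intro hk
    rw [Nat.choose_eq_zero_of_lt (by simpa using hk)]
    simp

theorem pow_eq_self_of_C_add_C_mul_X_pow_eq {u w : R} {m : ℕ} (hm : m ≠ 0)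
    (h : (C u + C w * X) ^ m = C u + C w * X ^ m) : u ^ m = u ∧ w ^ m = w := by
  have h₀ := congrArg (coeff · 0) h
  have hₘ := congrArg (coeff · m) h
  simp only [coeff_C_add_C_mul_X_pow, coeff_add, coeff_C, coeff_C_mul, coeff_X_pow] at h₀ hₘ
  simp_all [eq_comm (a := 0)]

variable [NoZeroDivisors R] {u w : R} (hu : u ≠ 0) (hw : w ≠ 0) {m : ℕ}
include hu hw

theorem cast_choose_eq_zero_of_C_add_C_mul_X_pow_eq {k : ℕ} (hk₀ : 0 < k) (hkm : k < m)
    (h : (C u + C w * X) ^ m = C u + C w * X ^ m) : (m.choose k : R) = 0 := by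
  have hₖ := congrArg (coeff · k) h
  simp only [coeff_C_add_C_mul_X_pow, coeff_add, coeff_C, coeff_C_mul, coeff_X_pow,
    if_neg hk₀.ne', if_neg hkm.ne] at hₖ
  simpa [pow_ne_zero _ hu, pow_ne_zero _ hw] using hₖ

theorem eq_pow_multiplicity_of_C_add_C_mul_X_pow_eq (p : ℕ) [Fact p.Prime] [CharP R p]
    (hm : 0 < m) (h : (C u + C w * X) ^ m = C u + C w * X ^ m) : m = p ^ multiplicity p m := by
  refine Choose.eq_pow_multiplicity_of_choose_modEq_zero hm fun k hk => ?_
  obtain ⟨hk₁, hk₂⟩ := Finset.mem_Icc.mp hk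
  have := cast_choose_eq_zero_of_C_add_C_mul_X_pow_eq hu hw hk₁ (by omega) h
  exact Int.modEq_zero_iff_dvd.mpr (by exact_mod_cast (CharP.cast_eq_zero_iff R p _).mp this)

end

theorem stmt_2_general {p h : ℕ} (hp : p.Prime)
    {F : Type*} [Field F] [Fintype F] (hF : Fintype.card F = p ^ h)
    (n : ℕ) (hdiv : n ∣ n + 3 * (p ^ h - 1))
    (a b : F) (hab : a * b ≠ 0)
    (heq : ((C (1 / b) - C (a / b) * X ^ n : Polynomial F)) ^ (3 * (p ^ h - 1) / n + 1) =
      C (1 / b) - C (a / b) * X ^ (n + 3 * (p ^ h - 1))) :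
    ∃ r : ℕ, 0 < r ∧ 3 * (p ^ h - 1) / n + 1 = p ^ r ∧
      a ^ (p ^ r) = a ∧ b ^ (p ^ r) = b := by
  have := Fact.mk hp
  have := charP_of_card_eq_prime_pow hF
  obtain ⟨ha, hb⟩ := mul_ne_zero_iff.mp hab
  have hq : 1 < p ^ h := hF ▸ Fintype.one_lt_card
  obtain ⟨d, hd⟩ : n ∣ 3 * (p ^ h - 1) := (Nat.dvd_add_right dvd_rfl).mp hdiv
  have hn : 0 < n := Nat.pos_of_ne_zero (by rintro rfl; omega)
  have hd₀ : 0 < d := Nat.pos_of_ne_zero (by rintro rfl; omega)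
  rw [hd, Nat.mul_div_cancel_left _ hn] at heq ⊢
  set u := 1 / b
  set w := -(a / b)
  have hred : (C u + C w * X) ^ (d + 1) = C u + C w * X ^ (d + 1) := by
    apply expand_injective hn
    rw [show n + n * d = n * (d + 1) by ring] at heq
    simpa [w, sub_eq_add_neg, pow_mul] using heq
  obtain ⟨hum, hwm⟩ := pow_eq_self_of_C_add_C_mul_X_pow_eq d.add_one_ne_zero hred
  set r := multiplicity p (d + 1)
  have hmr : d + 1 = p ^ r :=
    eq_pow_multiplicity_of_C_add_C_mul_X_pow_eq (by simp [u, hb]) (by simp [w, ha, hb]) p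
      d.add_one_pos hred
  have hr : 0 < r := Nat.pos_of_ne_zero fun h0 => by rw [h0, pow_zero] at hmr; omega
  refine ⟨r, hr, hmr, ?_⟩
  set φ := iterateFrobenius F p r
  have hφ (x : F) : φ x = x ^ p ^ r := iterateFrobenius_def p r x
  rw [hmr, ← hφ] at hum hwm
  rw [← hφ, ← hφ]
  have hφb : φ b = b := by simpa [u] using congrArg Inv.inv hum
  have ha_eq : a = -w * b := by simp [w, hb]
  exact ⟨by rw [ha_eq, map_mul, map_neg, hwm, hφb], hφb⟩

theorem stmt_2 {p h : ℕ} (hp : p.Prime) (hp2 : 2 < p)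
    {F : Type*} [Field F] [Fintype F] (hF : Fintype.card F = p ^ h)
    (n : ℕ) (hn3 : 3 < n) (hdiv : n ∣ n + 3 * (p ^ h - 1))
    (a b : F) (hab : a * b ≠ 0)
    (heq : ((C (1 / b) - C (a / b) * X ^ n : Polynomial F)) ^ (3 * (p ^ h - 1) / n + 1) =
      C (1 / b) - C (a / b) * X ^ (n + 3 * (p ^ h - 1))) :
    ∃ r : ℕ, 0 < r ∧ 3 * (p ^ h - 1) / n + 1 = p ^ r ∧
      a ^ (p ^ r) = a ∧ b ^ (p ^ r) = b :=
  stmt_2_general hp hF n hdiv a b hab heq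
end

section
/- Let K be a field of characteristic p > 3. The projective plane curve X²Z² + Y²Z² - X²Y² = 0 is irreducible over the algebraic closure of K. -/
/-!
As a polynomial in `X 0` over `R = L[x, y]` (with `x = X 1`, `y = X 2`) the form is
`(y² - x²) T² + x² y²`, primitive since its coefficients are coprime. By Gauss's lemma it is
irreducible iff it has no root in `Frac R`. As `-x² y²` is a square, a root would make `y² - x²`
a square in `Frac R`, hence in the integrally closed ring `R`; but `y² - x²` specializes to
`2 T + 1` under `(x, y) ↦ (T, T + 1)`, which has odd degree once `2 ≠ 0`.
-/

open MvPolynomial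

theorem IsIntegrallyClosed.isSquare_of_isSquare_algebraMap {R K : Type*} [CommRing R] [CommRing K]
    [Algebra R K] [IsFractionRing R K] [IsIntegrallyClosed R] {a : R}
    (h : IsSquare (algebraMap R K a)) : IsSquare a := by
  obtain ⟨y, hy⟩ := h
  obtain ⟨w, rfl⟩ := exists_algebraMap_eq_of_isIntegral_pow (R := R) (x := y) two_pos
    (by rw [sq, ← hy]; exact isIntegral_algebraMap)
  exact ⟨w, IsFractionRing.injective R K (by simpa using hy)⟩

namespace Polynomial

variable {R : Type*}

theorem not_isSquare_of_odd_natDegree [Semiring R] [NoZeroDivisors R] {p : R[X]}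
    (hp : Odd p.natDegree) : ¬IsSquare p := by
  rintro ⟨q, rfl⟩
  rw [← sq, natDegree_pow] at hp
  exact Nat.not_odd_iff_even.mpr (even_two_mul _) hp

theorem isPrimitive_C_mul_X_pow_add_C [CommSemiring R] {a c : R} (hac : IsRelPrime a c) {n : ℕ}
    (hn : n ≠ 0) : (C a * X ^ n + C c).IsPrimitive := by
  rw [isPrimitive_iff_isUnit_of_C_dvd]
  intro r hr
  rw [C_dvd_iff_dvd_coeff] at hr
  exact hac (by simpa [coeff_C, hn] using hr n) (by simpa [coeff_C, Ne.symm hn] using hr 0)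

theorem irreducible_C_mul_X_sq_add_C {K : Type*} [Field K] {a c : K} (ha : ¬IsSquare a)
    (hc : IsSquare (-c)) (hc0 : c ≠ 0) : Irreducible (C a * X ^ 2 + C c) := by
  have ha0 : a ≠ 0 := by rintro rfl; exact ha IsSquare.zero
  have hdeg : (C a * X ^ 2 + C c).natDegree = 2 := by
    rw [natDegree_add_C, natDegree_C_mul_X_pow 2 a ha0]
  rw [irreducible_iff_roots_eq_zero_of_degree_le_three hdeg.ge (by omega)]
  refine Multiset.eq_zero_of_forall_notMem fun x hx => ?_
  have hroot : a * x ^ 2 + c = 0 := by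
    simpa using (mem_roots (ne_zero_of_natDegree_gt (n := 0) (by omega))).mp hx
  have hx0 : x ≠ 0 := by rintro rfl; simp [hc0] at hroot
  obtain ⟨s, hs⟩ := hc
  exact ha ⟨s / x, by field_simp; linear_combination hroot + hs⟩

theorem irreducible_C_mul_X_sq_add_C_of_isRelPrime [CommRing R] [IsDomain R]
    [IsGCDMonoid R] {a c : R} (hac : IsRelPrime a c) (ha : ¬IsSquare a) (hc : IsSquare (-c))
    (hc0 : c ≠ 0) : Irreducible (C a * X ^ 2 + C c) := by
  let K := FractionRing R
  rw [(isPrimitive_C_mul_X_pow_add_C hac two_ne_zero).irreducible_iff_irreducible_map_fraction_map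
    (K := K)]
  simp only [Polynomial.map_add, Polynomial.map_mul, map_C, Polynomial.map_pow, map_X]
  exact irreducible_C_mul_X_sq_add_C
    (fun h => ha (IsIntegrallyClosed.isSquare_of_isSquare_algebraMap h))
    (by simpa using hc.map (algebraMap R K))
    ((map_ne_zero_iff _ (IsFractionRing.injective R K)).mpr hc0)

end Polynomial

section

variable {R : Type*} [CommRing R]

theorem isRelPrime_X_sq_sub_X_sq_X_sq_mul_X_sq [IsDomain R] [UniqueFactorizationMonoid R] :
    IsRelPrime (X 1 ^ 2 - X 0 ^ 2 : MvPolynomial (Fin 2) R) (X 0 ^ 2 * X 1 ^ 2) := by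
  have hX (i : Fin 2) : IsRelPrime (X i) (X 1 ^ 2 - X 0 ^ 2 : MvPolynomial (Fin 2) R) := by
    rw [X_prime.irreducible.isRelPrime_iff_not_dvd]
    intro h
    have := map_dvd (eval (Pi.single (1 - i) 1)) h
    fin_cases i <;> simp at this
  exact ((hX 0).pow_left.mul_left (hX 1).pow_left).symm

theorem not_isSquare_X_sq_sub_X_sq [IsDomain R] (h2 : (2 : R) ≠ 0) :
    ¬IsSquare (X 1 ^ 2 - X 0 ^ 2 : MvPolynomial (Fin 2) R) := by
  intro h
  have hspec : aeval ![(Polynomial.X : Polynomial R), Polynomial.X + 1]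
      (X 1 ^ 2 - X 0 ^ 2 : MvPolynomial (Fin 2) R) = Polynomial.C 2 * Polynomial.X + 1 := by
    simp only [map_sub, map_pow, aeval_X, Matrix.cons_val_zero, Matrix.cons_val_one, map_ofNat]
    ring
  refine Polynomial.not_isSquare_of_odd_natDegree ?_ (hspec ▸ h.map (aeval _))
  rw [← Polynomial.C_1, Polynomial.natDegree_add_C, Polynomial.natDegree_C_mul_X 2 h2]
  exact odd_one

theorem isSquare_neg_X_sq_mul_X_sq (h : IsSquare (-1 : R)) :
    IsSquare (-(X 0 ^ 2 * X 1 ^ 2) : MvPolynomial (Fin 2) R) := by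
  obtain ⟨i, hi⟩ := h
  have hCi : (-1 : MvPolynomial (Fin 2) R) = C i * C i := by simpa using congrArg C hi
  exact ⟨C i * X 0 * X 1, by linear_combination (X 0 ^ 2 * X 1 ^ 2) * hCi⟩

end

theorem stmt_4_general {K : Type*} [Field K] {p : ℕ} [CharP K p] (hp3 : 3 < p) :
    Irreducible ((X 0) ^ 2 * (X 2) ^ 2 + (X 1) ^ 2 * (X 2) ^ 2 - (X 0) ^ 2 * (X 1) ^ 2 :
      MvPolynomial (Fin 3) (AlgebraicClosure K)) := by
  set L := AlgebraicClosure K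
  have h2 : (2 : L) ≠ 0 := by
    have h2K : (2 : K) ≠ 0 := fun h => by
      have := Nat.le_of_dvd two_pos ((CharP.cast_eq_zero_iff K p 2).mp (by exact_mod_cast h))
      omega
    rw [← map_ofNat (algebraMap K L) 2]
    exact (map_ne_zero _).mpr h2K
  rw [← MulEquiv.irreducible_iff (finSuccEquiv L 2)]
  have hX1 : (X 1 : MvPolynomial (Fin 3) L) = X (Fin.succ 0) := rfl
  have hX2 : (X 2 : MvPolynomial (Fin 3) L) = X (Fin.succ 1) := rfl
  have hpoly : finSuccEquiv L 2 ((X 0) ^ 2 * (X 2) ^ 2 + (X 1) ^ 2 * (X 2) ^ 2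
        - (X 0) ^ 2 * (X 1) ^ 2) =
      Polynomial.C (X 1 ^ 2 - X 0 ^ 2) * Polynomial.X ^ 2 + Polynomial.C (X 0 ^ 2 * X 1 ^ 2) := by
    rw [hX1, hX2]
    simp only [map_sub, map_add, map_mul, map_pow, finSuccEquiv_X_zero, finSuccEquiv_X_succ]
    ring
  rw [hpoly]
  exact Polynomial.irreducible_C_mul_X_sq_add_C_of_isRelPrime isRelPrime_X_sq_sub_X_sq_X_sq_mul_X_sq
    (not_isSquare_X_sq_sub_X_sq h2) (isSquare_neg_X_sq_mul_X_sq (IsAlgClosed.exists_eq_mul_self _))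
    (by simp [X_ne_zero])

theorem stmt_4 {K : Type*} [Field K] {p : ℕ} [CharP K p] (hp : p.Prime) (hp3 : 3 < p) :
    Irreducible ((X 0) ^ 2 * (X 2) ^ 2 + (X 1) ^ 2 * (X 2) ^ 2 - (X 0) ^ 2 * (X 1) ^ 2 :
      MvPolynomial (Fin 3) (AlgebraicClosure K)) :=
  stmt_4_general hp3
end

section
/- Let K be an algebraically closed field of characteristic p > 3. The homogeneous polynomial Y²Z² + X²Z² + X²Y² - 2XYZ(X + Y + Z) of degree 4 is irreducible in K[X,Y,Z]. -/
/-!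
As a polynomial in `X 0` over `K[Y, Z]` (with `Y = X 1`, `Z = X 2`) the quartic is the quadratic
`(Y - Z)² T² - 2YZ(Y + Z) T + Y²Z²`. Its outer coefficients are coprime, so it has no constant
factor, and a product of two linear factors would make the discriminant `16 (YZ)³` a square. It is
not one: setting `Z = 1` turns it into `16 Y³`, of odd degree as soon as `2 ≠ 0`.
-/

open MvPolynomial

namespace Polynomial

theorem not_isSquare_C_mul_X_pow {R : Type*} [Semiring R] [NoZeroDivisors R] {c : R}
    (hc : c ≠ 0) {n : ℕ} (hn : Odd n) : ¬IsSquare (C c * X ^ n) := by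
  rintro ⟨m, hm⟩
  have := nontrivial_of_ne c 0 hc
  have hm0 : m ≠ 0 := by
    rintro rfl
    simp [hc] at hm
  have hdeg := congrArg natDegree hm
  rw [natDegree_C_mul_X_pow n c hc, natDegree_mul hm0 hm0] at hdeg
  exact Nat.not_even_iff_odd.mpr hn ⟨_, hdeg⟩

theorem discrim_eq_sq_of_quadratic_eq_mul {R : Type*} [CommRing R] {a b c p q r s : R}
    (h : C a * X ^ 2 + C b * X + C c = (C p * X + C q) * (C r * X + C s)) :
    discrim a b c = (p * s - q * r) ^ 2 := by
  rw [show (C p * X + C q) * (C r * X + C s) = C (p * r) * X ^ 2 + C (p * s + q * r) * X + C (q * s)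
    by simp only [map_mul, map_add]; ring] at h
  have h2 : a = p * r := by simpa [-map_mul, coeff_X, coeff_C] using congrArg (coeff · 2) h
  have h1 : b = p * s + q * r := by simpa [-map_mul, coeff_X, coeff_C] using congrArg (coeff · 1) h
  have h0 : c = q * s := by simpa [-map_mul, coeff_X, coeff_C] using congrArg (coeff · 0) h
  rw [discrim, h2, h1, h0]
  ring

theorem irreducible_quadratic_of_isRelPrime_of_not_isSquare_discrim {R : Type*} [CommRing R]
    [IsDomain R] {a b c : R} (hac : IsRelPrime a c) (hd : ¬IsSquare (discrim a b c)) :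
    Irreducible (C a * X ^ 2 + C b * X + C c) := by
  have ha : a ≠ 0 := by
    rintro rfl
    exact hd ⟨b, by simp [discrim, sq]⟩
  set P := C a * X ^ 2 + C b * X + C c
  have hP : P.natDegree = 2 := natDegree_quadratic ha
  have isUnit_of_natDegree_eq_zero (g h : R[X]) (hgh : P = g * h) (hg : g.natDegree = 0) :
      IsUnit g := by
    obtain ⟨r, rfl⟩ := natDegree_eq_zero.mp hg
    have hr := (C_dvd_iff_dvd_coeff r P).mp ⟨h, hgh⟩
    exact isUnit_C.mpr (hac (by simpa [P] using hr 2) (by simpa [P] using hr 0))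
  refine ⟨not_isUnit_of_natDegree_pos P (by omega), fun g h hgh => ?_⟩
  have hP0 : P ≠ 0 := ne_zero_of_natDegree_gt (n := 0) (by omega)
  have hdeg : g.natDegree + h.natDegree = 2 := by
    rw [← natDegree_mul (left_ne_zero_of_mul (hgh ▸ hP0)) (right_ne_zero_of_mul (hgh ▸ hP0)),
      ← hgh, hP]
  by_cases hg : g.natDegree = 0
  · exact .inl (isUnit_of_natDegree_eq_zero g h hgh hg)
  by_cases hh : h.natDegree = 0
  · exact .inr (isUnit_of_natDegree_eq_zero h g (hgh.trans (mul_comm g h)) hh)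
  obtain ⟨p, q, rfl⟩ := exists_eq_X_add_C_of_natDegree_le_one (show g.natDegree ≤ 1 by omega)
  obtain ⟨r, s, rfl⟩ := exists_eq_X_add_C_of_natDegree_le_one (show h.natDegree ≤ 1 by omega)
  exact (hd ⟨_, (discrim_eq_sq_of_quadratic_eq_mul hgh).trans (sq _)⟩).elim

end Polynomial

namespace MvPolynomial

variable {σ R : Type*} [CommRing R] [IsDomain R] {i j : σ}

theorem isRelPrime_X_sub_X_sq_X_sq_mul_X_sq [UniqueFactorizationMonoid R] (hij : i ≠ j) :
    IsRelPrime ((X i - X j : MvPolynomial σ R) ^ 2) (X i ^ 2 * X j ^ 2) := by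
  have hi : IsRelPrime (X i - X j : MvPolynomial σ R) (X i) := by
    rw [isRelPrime_comm, X_prime.irreducible.isRelPrime_iff_not_dvd, dvd_sub_right dvd_rfl,
      X_dvd_X]
    exact hij
  have hj : IsRelPrime (X i - X j : MvPolynomial σ R) (X j) := by
    rw [isRelPrime_comm, X_prime.irreducible.isRelPrime_iff_not_dvd, dvd_sub_left dvd_rfl,
      X_dvd_X]
    exact hij.symm
  rw [← mul_pow]
  exact (hi.mul_right hj).pow

theorem not_isSquare_sixteen_mul_X_mul_X_pow_three (h2 : (2 : R) ≠ 0) (hij : i ≠ j) :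
    ¬IsSquare (16 * (X i * X j) ^ 3 : MvPolynomial σ R) := by
  classical
  intro hsq
  have h16 : (16 : R) ≠ 0 := by
    rw [show (16 : R) = 2 ^ 4 by norm_num]
    exact pow_ne_zero 4 h2
  apply Polynomial.not_isSquare_C_mul_X_pow h16 (n := 3) (by decide)
  rw [map_ofNat]
  simpa [hij.symm] using hsq.map (aeval fun k => if k = i then (Polynomial.X : Polynomial R) else 1)

theorem irreducible_quadratic_X_sub_X [UniqueFactorizationMonoid R] (h2 : (2 : R) ≠ 0)
    (hij : i ≠ j) :
    Irreducible (Polynomial.C ((X i - X j : MvPolynomial σ R) ^ 2) * Polynomial.X ^ 2 +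
      Polynomial.C (-(2 * X i * X j * (X i + X j))) * Polynomial.X +
      Polynomial.C (X i ^ 2 * X j ^ 2)) := by
  have hd : discrim ((X i - X j : MvPolynomial σ R) ^ 2) (-(2 * X i * X j * (X i + X j)))
      (X i ^ 2 * X j ^ 2) = 16 * (X i * X j) ^ 3 := by
    rw [discrim]
    ring
  refine Polynomial.irreducible_quadratic_of_isRelPrime_of_not_isSquare_discrim
    (isRelPrime_X_sub_X_sq_X_sq_mul_X_sq hij) ?_
  rw [hd]
  exact not_isSquare_sixteen_mul_X_mul_X_pow_three h2 hij

end MvPolynomial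

theorem stmt_5_general {K : Type*} [Field K] {p : ℕ} [CharP K p]
    (hp3 : 3 < p) :
    Irreducible ((X 1) ^ 2 * (X 2) ^ 2 + (X 0) ^ 2 * (X 2) ^ 2 + (X 0) ^ 2 * (X 1) ^ 2 -
      2 * X 0 * X 1 * X 2 * (X 0 + X 1 + X 2) : MvPolynomial (Fin 3) K) := by
  have h2 : (2 : K) ≠ 0 := by
    exact_mod_cast CharP.cast_ne_zero_of_ne_of_prime K Nat.prime_two (by omega : p ≠ 2)
  rw [← MulEquiv.irreducible_iff (finSuccEquiv K 2)]
  convert irreducible_quadratic_X_sub_X h2 (zero_ne_one : (0 : Fin 2) ≠ 1) using 1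
  simp only [map_add, map_sub, map_mul, map_pow, map_neg, map_ofNat, finSuccEquiv_X_zero]
  rw [show (X 1 : MvPolynomial (Fin 3) K) = X (Fin.succ 0) from rfl,
    show (X 2 : MvPolynomial (Fin 3) K) = X (Fin.succ 1) from rfl]
  simp only [finSuccEquiv_X_succ]
  ring

theorem stmt_5 {K : Type*} [Field K] [IsAlgClosed K] {p : ℕ} [CharP K p]
    (hp : p.Prime) (hp3 : 3 < p) :
    Irreducible ((X 1) ^ 2 * (X 2) ^ 2 + (X 0) ^ 2 * (X 2) ^ 2 + (X 0) ^ 2 * (X 1) ^ 2 -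
      2 * X 0 * X 1 * X 2 * (X 0 + X 1 + X 2) : MvPolynomial (Fin 3) K) :=
  stmt_5_general hp3
end

section
/- Let K be an algebraically closed field of characteristic p > 3. The homogeneous polynomial X⁶ + Y⁶ + Z⁶ - 2(X³Y³ + X³Z³ + Y³Z³) of degree 6 is irreducible in K[X,Y,Z]. -/
/-!
As a polynomial in `X 0` over `k[X 1, X 2]`, the sextic (the dual curve of the Fermat cubic)
is `T ^ 6 - 2 a T ^ 3 + (a ^ 2 - d)` with `a = X₁³ + X₂³` and `d = 4 X₁³ X₂³`, whose roots
are the cube roots of `a ± √d`; note `a ^ 2 - d = (X₁³ - X₂³) ^ 2`. It is monic, so by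
Gauss's lemma it suffices to prove irreducibility over `F = k(X₁, X₂)`.

Over any field `F` in which `d` is not a square and `a ^ 2 - d` is not a cube, a cube root
`z` of `a + √d` has degree `6`: `F(√d)` has degree `2`, and `a + √d` is not a cube there,
since for `t ^ 3 = a + √d` the product `t · t̄` with its conjugate would be a cube root of
`a ^ 2 - d`, which has degree `3` over `F`. As `√d = z ^ 3 - a`, `z` generates the whole
tower, so the sextic is its minimal polynomial.

Both conditions descend from `k(X₁, X₂)` to the integrally closed ring `k[X₁, X₂]`, where
they are refuted by specialising to one variable, giving polynomials of degrees `3` and `4`.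
-/

open Polynomial

theorem CharP.natCast_ne_zero_of_lt {R : Type*} [AddMonoidWithOne R] (p : ℕ) [CharP R p]
    {n : ℕ} (hn : n ≠ 0) (hnp : n < p) : (n : R) ≠ 0 := fun h ↦
  hnp.not_ge (Nat.le_of_dvd (Nat.pos_of_ne_zero hn) ((CharP.cast_eq_zero_iff R p n).1 h))

theorem Polynomial.pow_ne_of_not_dvd_natDegree {R : Type*} [Semiring R] [NoZeroDivisors R]
    {n : ℕ} {f : R[X]} (h : ¬n ∣ f.natDegree) (g : R[X]) : g ^ n ≠ f := by
  rintro rfl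
  exact h (natDegree_pow g n ▸ dvd_mul_right n _)

theorem IsIntegrallyClosed.pow_ne_algebraMap {R K : Type*} [CommRing R]
    [IsIntegrallyClosed R] [Field K] [Algebra R K] [IsFractionRing R K] {n : ℕ} (hn : 0 < n)
    {r : R} (hr : ∀ s : R, s ^ n ≠ r) (x : K) : x ^ n ≠ algebraMap R K r := by
  intro hx
  obtain ⟨s, rfl⟩ := exists_algebraMap_eq_of_isIntegral_pow hn (hx ▸ isIntegral_algebraMap)
  exact hr s (IsFractionRing.injective R K (by rw [map_pow, hx]))

theorem finrank_adjoinRoot_X_pow_sub_C {F : Type*} [Field F] (n : ℕ) (a : F) :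
    Module.finrank F (AdjoinRoot (X ^ n - C a)) = n :=
  finrank_quotient_span_eq_natDegree.trans natDegree_X_pow_sub_C

theorem AdjoinRoot.subalgebra_eq_top_of_root_mem {F L : Type*} [CommRing F] [CommRing L]
    [Algebra F L] {g : L[X]} (A : Subalgebra F (AdjoinRoot g))
    (hL : ∀ l : L, algebraMap L _ l ∈ A) (hroot : AdjoinRoot.root g ∈ A) : A = ⊤ := by
  refine eq_top_iff.2 fun x _ ↦ ?_
  obtain ⟨q, rfl⟩ := AdjoinRoot.mk_surjective x
  rw [← AdjoinRoot.aeval_eq, aeval_eq_sum_range]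
  refine Subalgebra.sum_mem _ fun i _ ↦ ?_
  rw [Algebra.smul_def]
  exact mul_mem (hL _) (pow_mem hroot i)

theorem Polynomial.Monic.irreducible_of_aeval_eq_zero_of_adjoin_eq_top {F M : Type*} [Field F]
    [Field M] [Algebra F M] [FiniteDimensional F M] {f : F[X]} {z : M} (hf : f.Monic)
    (hz : aeval z f = 0) (hgen : Algebra.adjoin F {z} = ⊤)
    (hdeg : f.natDegree = Module.finrank F M) : Irreducible f := by
  have hint := IsIntegral.of_finite F z
  have hmin : (minpoly F z).natDegree = Module.finrank F M :=
    (Field.primitive_element_iff_minpoly_natDegree_eq F z).1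
      ((IntermediateField.adjoin_simple_eq_top_iff_of_isAlgebraic hint.isAlgebraic).2 hgen)
  rw [minpoly.unique_of_degree_le_degree_minpoly _ _ hf hz (by
    rw [degree_eq_natDegree hf.ne_zero, degree_eq_natDegree (minpoly.ne_zero hint), hmin, hdeg])]
  exact minpoly.irreducible hint

/-- The monic polynomial whose roots are the cube roots of `a + √d` and `a - √d`. -/
noncomputable def cubeRootSextic {R : Type*} [CommRing R] (a d : R) : R[X] :=
  X ^ 6 - C (2 * a) * X ^ 3 + C (a ^ 2 - d)

section CommRing

variable {R S : Type*} [CommRing R] [CommRing S] (a d : R)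

theorem monic_cubeRootSextic [Nontrivial R] : (cubeRootSextic a d).Monic := by
  unfold cubeRootSextic
  monicity!

theorem natDegree_cubeRootSextic [Nontrivial R] : (cubeRootSextic a d).natDegree = 6 := by
  unfold cubeRootSextic
  compute_degree!

theorem map_cubeRootSextic (f : R →+* S) :
    (cubeRootSextic a d).map f = cubeRootSextic (f a) (f d) := by
  simp only [cubeRootSextic, Polynomial.map_add, Polynomial.map_sub, Polynomial.map_mul,
    Polynomial.map_pow, Polynomial.map_ofNat, map_X, map_C, map_mul, map_sub, map_pow, map_ofNat]

theorem aeval_cubeRootSextic {A : Type*} [CommRing A] [Algebra R A] {w z : A}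
    (hw : w ^ 2 = algebraMap R A d) (hz : z ^ 3 = algebraMap R A a + w) :
    aeval z (cubeRootSextic a d) = 0 := by
  simp only [cubeRootSextic, map_add, map_sub, map_mul, map_pow, aeval_X, aeval_C,
    map_ofNat]
  linear_combination (z ^ 3 - algebraMap R A a + w) * hz + hw

end CommRing

section Field

variable {F : Type*} [Field F]

theorem exists_algHom_adjoinRoot_sq_root_eq_neg (d : F) :
    ∃ σ : AdjoinRoot (X ^ 2 - C d) →ₐ[F] AdjoinRoot (X ^ 2 - C d),
      σ (AdjoinRoot.root _) = -AdjoinRoot.root _ := by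
  refine ⟨AdjoinRoot.liftAlgHom _ (Algebra.ofId _ _) (-AdjoinRoot.root _) ?_,
    AdjoinRoot.liftAlgHom_root _ _ _ _⟩
  simp [root_X_pow_sub_C_pow, AdjoinRoot.algebraMap_eq]

theorem pow_three_ne_algebraMap_add_root {a d : F} (hd : ∀ b : F, b ^ 2 ≠ d)
    (ha : ∀ b : F, b ^ 3 ≠ a ^ 2 - d) (t : AdjoinRoot (X ^ 2 - C d)) :
    t ^ 3 ≠ algebraMap F _ a + AdjoinRoot.root _ := by
  have := Fact.mk (X_pow_sub_C_irreducible_of_prime Nat.prime_two hd)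
  have := (monic_X_pow_sub_C d two_ne_zero).finite_adjoinRoot
  intro ht
  obtain ⟨σ, hσ⟩ := exists_algHom_adjoinRoot_sq_root_eq_neg d
  have hnorm : (t * σ t) ^ 3 = algebraMap F _ (a ^ 2 - d) := by
    rw [mul_pow, ← map_pow, ht, map_add, σ.commutes, hσ]
    have hw := root_X_pow_sub_C_pow 2 d
    rw [← AdjoinRoot.algebraMap_eq] at hw
    simp only [map_sub, map_pow]
    linear_combination -hw
  have hmin := minpoly.eq_of_irreducible_of_monic (x := t * σ t)
    (X_pow_sub_C_irreducible_of_prime Nat.prime_three ha) (by simp [hnorm])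
    (monic_X_pow_sub_C _ three_ne_zero)
  have hdeg := minpoly.natDegree_le (A := F) (t * σ t)
  rw [← hmin, natDegree_X_pow_sub_C, finrank_adjoinRoot_X_pow_sub_C] at hdeg
  omega

theorem irreducible_cubeRootSextic {a d : F} (hd : ∀ b : F, b ^ 2 ≠ d)
    (ha : ∀ b : F, b ^ 3 ≠ a ^ 2 - d) : Irreducible (cubeRootSextic a d) := by
  have := Fact.mk (X_pow_sub_C_irreducible_of_prime Nat.prime_two hd)
  let L := AdjoinRoot (X ^ 2 - C d)
  let w : L := AdjoinRoot.root _
  have := Fact.mk (X_pow_sub_C_irreducible_of_prime Nat.prime_three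
    (pow_three_ne_algebraMap_add_root hd ha))
  let M := AdjoinRoot (X ^ 3 - C (algebraMap F L a + w))
  let z : M := AdjoinRoot.root _
  have := (monic_X_pow_sub_C d two_ne_zero).finite_adjoinRoot
  have := (monic_X_pow_sub_C (algebraMap F L a + w) three_ne_zero).finite_adjoinRoot
  have : Module.Finite F M := .trans L M
  have hw : algebraMap L M w ^ 2 = algebraMap F M d := by
    rw [← map_pow, root_X_pow_sub_C_pow, ← AdjoinRoot.algebraMap_eq,
      ← IsScalarTower.algebraMap_apply]
  have hz : z ^ 3 = algebraMap F M a + algebraMap L M w := by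
    rw [root_X_pow_sub_C_pow, ← AdjoinRoot.algebraMap_eq, map_add,
      ← IsScalarTower.algebraMap_apply]
  have hgen : Algebra.adjoin F {z} = ⊤ := by
    set A := Algebra.adjoin F {z}
    have hzA : z ∈ A := Algebra.self_mem_adjoin_singleton F z
    have hwA : algebraMap L M w ∈ A := by
      rw [show algebraMap L M w = z ^ 3 - algebraMap F M a by rw [hz]; ring]
      exact sub_mem (pow_mem hzA 3) (A.algebraMap_mem a)
    have hLA : A.comap (IsScalarTower.toAlgHom F L M) = ⊤ :=
      AdjoinRoot.subalgebra_eq_top_of_root_mem _ (fun b ↦ Subalgebra.algebraMap_mem _ b) hwA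
    refine AdjoinRoot.subalgebra_eq_top_of_root_mem A (fun l ↦ ?_) hzA
    exact Algebra.eq_top_iff.1 hLA l
  refine (monic_cubeRootSextic a d).irreducible_of_aeval_eq_zero_of_adjoin_eq_top
    (aeval_cubeRootSextic a d hw hz) hgen ?_
  rw [natDegree_cubeRootSextic, ← Module.finrank_mul_finrank F L M,
    finrank_adjoinRoot_X_pow_sub_C, finrank_adjoinRoot_X_pow_sub_C]

end Field

namespace MvPolynomial

variable {K : Type*} [Field K]

theorem sq_ne_four_mul_X_pow_three_mul_X_pow_three (h2 : (2 : K) ≠ 0)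
    (s : MvPolynomial (Fin 2) K) : s ^ 2 ≠ 4 * X 0 ^ 3 * X 1 ^ 3 := by
  intro hs
  have hspec := congrArg (aeval ![(Polynomial.X : K[X]), 1]) hs
  simp only [map_pow, map_mul, map_ofNat, aeval_X, Matrix.cons_val_zero, Matrix.cons_val_one,
    one_pow, mul_one] at hspec
  refine Polynomial.pow_ne_of_not_dvd_natDegree ?_ _ hspec
  have h4 : (4 : K) ≠ 0 := by
    rw [show (4 : K) = 2 ^ 2 by norm_num]
    exact pow_ne_zero 2 h2
  rw [show (4 * Polynomial.X ^ 3 : K[X]).natDegree = 3 by compute_degree!]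
  decide

theorem pow_three_ne_sq_X_pow_three_sub_X_pow_three (h3 : (3 : K) ≠ 0)
    (s : MvPolynomial (Fin 2) K) : s ^ 3 ≠ (X 0 ^ 3 - X 1 ^ 3) ^ 2 := by
  intro hs
  have hspec := congrArg (aeval ![(Polynomial.X : K[X]), Polynomial.X + 1]) hs
  simp only [map_pow, map_sub, aeval_X, Matrix.cons_val_zero, Matrix.cons_val_one] at hspec
  refine Polynomial.pow_ne_of_not_dvd_natDegree ?_ _ hspec
  have h9 : (9 : K) ≠ 0 := by
    rw [show (9 : K) = 3 ^ 2 by norm_num]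
    exact pow_ne_zero 2 h3
  rw [show ((Polynomial.X ^ 3 - (Polynomial.X + 1) ^ 3) ^ 2 : K[X]).natDegree = 4 by
    rw [show (Polynomial.X ^ 3 - (Polynomial.X + 1) ^ 3 : K[X]) =
      -(3 * Polynomial.X ^ 2 + 3 * Polynomial.X + 1) by ring, neg_sq]
    compute_degree!]
  decide

theorem finSuccEquiv_dualFermat {R : Type*} [CommRing R] :
    finSuccEquiv R 2 (X 0 ^ 6 + X 1 ^ 6 + X 2 ^ 6 -
      2 * (X 0 ^ 3 * X 1 ^ 3 + X 0 ^ 3 * X 2 ^ 3 + X 1 ^ 3 * X 2 ^ 3)) =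
    cubeRootSextic (X 0 ^ 3 + X 1 ^ 3) (4 * X 0 ^ 3 * X 1 ^ 3) := by
  rw [show (X 1 : MvPolynomial (Fin 3) R) = X (Fin.succ 0) from rfl,
    show (X 2 : MvPolynomial (Fin 3) R) = X (Fin.succ 1) from rfl]
  simp only [map_add, map_sub, map_mul, map_pow, map_ofNat, finSuccEquiv_X_zero,
    finSuccEquiv_X_succ, cubeRootSextic]
  ring

end MvPolynomial

open MvPolynomial

theorem stmt_6_general {K : Type*} [Field K] {p : ℕ} [CharP K p]
    (hp3 : 3 < p) :
    Irreducible ((X 0) ^ 6 + (X 1) ^ 6 + (X 2) ^ 6 -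
      2 * ((X 0) ^ 3 * (X 1) ^ 3 + (X 0) ^ 3 * (X 2) ^ 3 + (X 1) ^ 3 * (X 2) ^ 3) :
      MvPolynomial (Fin 3) K) := by
  have h2 : (2 : K) ≠ 0 := by
    exact_mod_cast CharP.natCast_ne_zero_of_lt p two_ne_zero (by omega)
  have h3 : (3 : K) ≠ 0 := by
    exact_mod_cast CharP.natCast_ne_zero_of_lt p three_ne_zero (by omega)
  rw [← MulEquiv.irreducible_iff (finSuccEquiv K 2), finSuccEquiv_dualFermat,
    (monic_cubeRootSextic _ _).irreducible_iff_irreducible_map_fraction_map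
      (K := FractionRing (MvPolynomial (Fin 2) K)), map_cubeRootSextic]
  refine irreducible_cubeRootSextic
    (IsIntegrallyClosed.pow_ne_algebraMap two_pos (sq_ne_four_mul_X_pow_three_mul_X_pow_three h2))
    ?_
  rw [← map_pow, ← map_sub, show (X 0 ^ 3 + X 1 ^ 3) ^ 2 - 4 * X 0 ^ 3 * X 1 ^ 3 =
    ((X 0 ^ 3 - X 1 ^ 3) ^ 2 : MvPolynomial (Fin 2) K) by ring]
  exact IsIntegrallyClosed.pow_ne_algebraMap three_pos
    (pow_three_ne_sq_X_pow_three_sub_X_pow_three h3)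

theorem stmt_6 {K : Type*} [Field K] [IsAlgClosed K] {p : ℕ} [CharP K p]
    (hp : p.Prime) (hp3 : 3 < p) :
    Irreducible ((X 0) ^ 6 + (X 1) ^ 6 + (X 2) ^ 6 -
      2 * ((X 0) ^ 3 * (X 1) ^ 3 + (X 0) ^ 3 * (X 2) ^ 3 + (X 1) ^ 3 * (X 2) ^ 3) :
      MvPolynomial (Fin 3) K) :=
  stmt_6_general hp3
end

section
/- Let K be an algebraically closed field of characteristic p > 3 and let i ∈ K satisfy i² = -1. The set of singular points of the projective plane curve (X² + Y² - Z²)³ + 27X²Y²Z² = 0 is exactly the ten points {(0:1:1), (0:-1:1), (1:0:1), (-1:0:1), (i:1:0), (-i:1:0), (i:i:1), (i:-i:1), (-i:-i:1), (-i:i:1)}. -/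
/-!
With `q = X² + Y² - Z²`, the partial derivatives of `q³ + 27X²Y²Z²` are `6X(q² + 9Y²Z²)`,
`6Y(q² + 9X²Z²)` and `6Z(9X²Y² - q²)`. Since `6 ≠ 0`, splitting according to which coordinates
vanish shows that a point is singular exactly when `z = 0, x² = -y²`, or `x = 0, y² = z²`, or
`y = 0, x² = z²`, or `x² = y² = -z²`; with `i² = -1` these are the ten listed points.
-/

open MvPolynomial

theorem MvPolynomial.pderiv_ofNat {σ R : Type*} [CommSemiring R] (i : σ) (n : ℕ) [n.AtLeastTwo] :
    pderiv i (no_index (OfNat.ofNat n : MvPolynomial σ R)) = 0 :=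
  (pderiv i).map_natCast n

section CommRing

variable {R : Type*} [CommRing R]

def IsSingularPoint (F : MvPolynomial (Fin 3) R) (v : Fin 3 → R) : Prop :=
  eval v F = 0 ∧ eval v (pderiv 0 F) = 0 ∧ eval v (pderiv 1 F) = 0 ∧ eval v (pderiv 2 F) = 0

variable (R) in
/-- The homogenised astroid `x^(2/3) + y^(2/3) = 1`. -/
noncomputable def astroid : MvPolynomial (Fin 3) R :=
  (X 0 ^ 2 + X 1 ^ 2 - X 2 ^ 2) ^ 3 + 27 * X 0 ^ 2 * X 1 ^ 2 * X 2 ^ 2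

theorem pderiv_zero_astroid :
    pderiv 0 (astroid R) =
      6 * X 0 * ((X 0 ^ 2 + X 1 ^ 2 - X 2 ^ 2) ^ 2 + 9 * X 1 ^ 2 * X 2 ^ 2) := by
  simp only [astroid, map_add, map_sub, Derivation.leibniz, Derivation.leibniz_pow, pderiv_X,
    pderiv_ofNat, Pi.single_eq_same, Pi.single_eq_of_ne, ne_eq, Fin.reduceEq, not_false_eq_true,
    smul_eq_mul, nsmul_eq_mul]
  ring

theorem pderiv_one_astroid :
    pderiv 1 (astroid R) =
      6 * X 1 * ((X 0 ^ 2 + X 1 ^ 2 - X 2 ^ 2) ^ 2 + 9 * X 0 ^ 2 * X 2 ^ 2) := by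
  simp only [astroid, map_add, map_sub, Derivation.leibniz, Derivation.leibniz_pow, pderiv_X,
    pderiv_ofNat, Pi.single_eq_same, Pi.single_eq_of_ne, ne_eq, Fin.reduceEq, not_false_eq_true,
    smul_eq_mul, nsmul_eq_mul]
  ring

theorem pderiv_two_astroid :
    pderiv 2 (astroid R) =
      6 * X 2 * (9 * X 0 ^ 2 * X 1 ^ 2 - (X 0 ^ 2 + X 1 ^ 2 - X 2 ^ 2) ^ 2) := by
  simp only [astroid, map_add, map_sub, Derivation.leibniz, Derivation.leibniz_pow, pderiv_X,
    pderiv_ofNat, Pi.single_eq_same, Pi.single_eq_of_ne, ne_eq, Fin.reduceEq, not_false_eq_true,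
    smul_eq_mul, nsmul_eq_mul]
  ring

end CommRing

section Field

variable {K : Type*} [Field K]

theorem isSingularPoint_astroid_iff (h6 : (6 : K) ≠ 0) (x y z : K) :
    IsSingularPoint (astroid K) ![x, y, z] ↔
      (x ^ 2 + y ^ 2 - z ^ 2) ^ 3 + 27 * x ^ 2 * y ^ 2 * z ^ 2 = 0 ∧
      x * ((x ^ 2 + y ^ 2 - z ^ 2) ^ 2 + 9 * y ^ 2 * z ^ 2) = 0 ∧
      y * ((x ^ 2 + y ^ 2 - z ^ 2) ^ 2 + 9 * x ^ 2 * z ^ 2) = 0 ∧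
      z * (9 * x ^ 2 * y ^ 2 - (x ^ 2 + y ^ 2 - z ^ 2) ^ 2) = 0 := by
  rw [IsSingularPoint, pderiv_zero_astroid, pderiv_one_astroid, pderiv_two_astroid, astroid]
  simp [mul_assoc, h6]

theorem astroid_cases_of_singular (h3 : (3 : K) ≠ 0) {x y z : K}
    (h : (x ^ 2 + y ^ 2 - z ^ 2) ^ 3 + 27 * x ^ 2 * y ^ 2 * z ^ 2 = 0 ∧
      x * ((x ^ 2 + y ^ 2 - z ^ 2) ^ 2 + 9 * y ^ 2 * z ^ 2) = 0 ∧
      y * ((x ^ 2 + y ^ 2 - z ^ 2) ^ 2 + 9 * x ^ 2 * z ^ 2) = 0 ∧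
      z * (9 * x ^ 2 * y ^ 2 - (x ^ 2 + y ^ 2 - z ^ 2) ^ 2) = 0) :
    (z = 0 ∧ x ^ 2 = -y ^ 2) ∨ (x = 0 ∧ y ^ 2 = z ^ 2) ∨ (y = 0 ∧ x ^ 2 = z ^ 2) ∨
      (x ^ 2 = -z ^ 2 ∧ y ^ 2 = -z ^ 2) := by
  obtain ⟨hF, hx, hy, hz⟩ := h
  have h9 : (9 : K) ≠ 0 := by simpa [show (9 : K) = 3 ^ 2 by norm_num] using h3
  rcases eq_or_ne z 0 with rfl | hz0
  · have : (x ^ 2 + y ^ 2) ^ 3 = 0 := by linear_combination hF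
    exact Or.inl ⟨rfl, by linear_combination pow_eq_zero_iff three_ne_zero |>.1 this⟩
  replace hz := (mul_eq_zero.1 hz).resolve_left hz0
  rcases eq_or_ne x 0 with rfl | hx0
  · have : (y ^ 2 - z ^ 2) ^ 2 = 0 := by linear_combination -hz
    exact Or.inr <| Or.inl ⟨rfl, by linear_combination pow_eq_zero_iff two_ne_zero |>.1 this⟩
  rcases eq_or_ne y 0 with rfl | hy0
  · have : (x ^ 2 - z ^ 2) ^ 2 = 0 := by linear_combination -hz
    exact Or.inr <| Or.inr <| Or.inl
      ⟨rfl, by linear_combination pow_eq_zero_iff two_ne_zero |>.1 this⟩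
  replace hx := (mul_eq_zero.1 hx).resolve_left hx0
  replace hy := (mul_eq_zero.1 hy).resolve_left hy0
  have hxy : x ^ 2 = y ^ 2 :=
    mul_left_cancel₀ (mul_ne_zero h9 (pow_ne_zero 2 hz0)) (by linear_combination hy - hx)
  have hxz : x ^ 2 = -z ^ 2 :=
    mul_left_cancel₀ (mul_ne_zero h9 (pow_ne_zero 2 hy0)) (by linear_combination hz + hx)
  exact Or.inr <| Or.inr <| Or.inr ⟨hxz, hxy ▸ hxz⟩

theorem sq_eq_neg_sq_iff {i : K} (hi : i ^ 2 = -1) {a b : K} :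
    a ^ 2 = -b ^ 2 ↔ a = i * b ∨ a = -(i * b) := by
  rw [← sq_eq_sq_iff_eq_or_eq_neg, mul_pow, hi, neg_one_mul]

end Field

theorem stmt_8_general {K : Type*} [Field K] {p : ℕ} [CharP K p]
    (hp3 : 3 < p) (i : K) (hi : i ^ 2 = -1)
    (F : MvPolynomial (Fin 3) K)
    (hF : F = ((X 0) ^ 2 + (X 1) ^ 2 - (X 2) ^ 2) ^ 3 +
      27 * (X 0) ^ 2 * (X 1) ^ 2 * (X 2) ^ 2)
    (x y z : K) (hxyz : ¬ (x = 0 ∧ y = 0 ∧ z = 0)) :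
    (eval ![x, y, z] F = 0 ∧
      eval ![x, y, z] (pderiv 0 F) = 0 ∧
      eval ![x, y, z] (pderiv 1 F) = 0 ∧
      eval ![x, y, z] (pderiv 2 F) = 0) ↔
    (∃ c : K, c ≠ 0 ∧
      ((x, y, z) = (c * 0, c * 1, c * 1) ∨
       (x, y, z) = (c * 0, c * (-1), c * 1) ∨
       (x, y, z) = (c * 1, c * 0, c * 1) ∨
       (x, y, z) = (c * (-1), c * 0, c * 1) ∨
       (x, y, z) = (c * i, c * 1, c * 0) ∨
       (x, y, z) = (c * (-i), c * 1, c * 0) ∨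
       (x, y, z) = (c * i, c * i, c * 1) ∨
       (x, y, z) = (c * i, c * (-i), c * 1) ∨
       (x, y, z) = (c * (-i), c * (-i), c * 1) ∨
       (x, y, z) = (c * (-i), c * i, c * 1))) := by
  have h2 : (2 : K) ≠ 0 := by
    exact_mod_cast CharP.cast_ne_zero_of_ne_of_prime K Nat.prime_two (by omega)
  have h3 : (3 : K) ≠ 0 := by
    exact_mod_cast CharP.cast_ne_zero_of_ne_of_prime K Nat.prime_three (by omega)
  have h6 : (6 : K) ≠ 0 := by simpa [show (6 : K) = 2 * 3 by norm_num] using mul_ne_zero h2 h3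
  subst hF
  change IsSingularPoint (astroid K) ![x, y, z] ↔ _
  rw [isSingularPoint_astroid_iff h6]
  constructor
  · intro hsing
    rcases astroid_cases_of_singular h3 hsing with ⟨rfl, h⟩ | ⟨rfl, h⟩ | ⟨rfl, h⟩ | ⟨hx, hy⟩
    · have hy : y ≠ 0 := by rintro rfl; exact hxyz ⟨by simpa using h, rfl, rfl⟩
      rcases (sq_eq_neg_sq_iff hi).1 h with rfl | rfl <;> exact ⟨_, hy, by simp [mul_comm]⟩
    · have hz : z ≠ 0 := by rintro rfl; exact hxyz ⟨rfl, by simpa using h, rfl⟩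
      rcases sq_eq_sq_iff_eq_or_eq_neg.1 h with rfl | rfl <;> exact ⟨_, hz, by simp⟩
    · have hz : z ≠ 0 := by rintro rfl; exact hxyz ⟨by simpa using h, rfl, rfl⟩
      rcases sq_eq_sq_iff_eq_or_eq_neg.1 h with rfl | rfl <;> exact ⟨_, hz, by simp⟩
    · have hz : z ≠ 0 := by rintro rfl; exact hxyz ⟨by simpa using hx, by simpa using hy, rfl⟩
      rcases (sq_eq_neg_sq_iff hi).1 hx with rfl | rfl <;>
        rcases (sq_eq_neg_sq_iff hi).1 hy with rfl | rfl <;> exact ⟨_, hz, by simp [mul_comm]⟩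
  · rintro ⟨c, -, h | h | h | h | h | h | h | h | h | h⟩ <;> simp only [Prod.mk.injEq] at h <;>
      obtain ⟨rfl, rfl, rfl⟩ := h <;> refine ⟨?_, ?_, ?_, ?_⟩ <;> grind

theorem stmt_8 {K : Type*} [Field K] [IsAlgClosed K] {p : ℕ} [CharP K p]
    (hp : p.Prime) (hp3 : 3 < p) (i : K) (hi : i ^ 2 = -1)
    (F : MvPolynomial (Fin 3) K)
    (hF : F = ((X 0) ^ 2 + (X 1) ^ 2 - (X 2) ^ 2) ^ 3 +
      27 * (X 0) ^ 2 * (X 1) ^ 2 * (X 2) ^ 2)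
    (x y z : K) (hxyz : ¬ (x = 0 ∧ y = 0 ∧ z = 0)) :
    (eval ![x, y, z] F = 0 ∧
      eval ![x, y, z] (pderiv 0 F) = 0 ∧
      eval ![x, y, z] (pderiv 1 F) = 0 ∧
      eval ![x, y, z] (pderiv 2 F) = 0) ↔
    (∃ c : K, c ≠ 0 ∧
      ((x, y, z) = (c * 0, c * 1, c * 1) ∨
       (x, y, z) = (c * 0, c * (-1), c * 1) ∨
       (x, y, z) = (c * 1, c * 0, c * 1) ∨
       (x, y, z) = (c * (-1), c * 0, c * 1) ∨
       (x, y, z) = (c * i, c * 1, c * 0) ∨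
       (x, y, z) = (c * (-i), c * 1, c * 0) ∨
       (x, y, z) = (c * i, c * i, c * 1) ∨
       (x, y, z) = (c * i, c * (-i), c * 1) ∨
       (x, y, z) = (c * (-i), c * (-i), c * 1) ∨
       (x, y, z) = (c * (-i), c * i, c * 1))) :=
  stmt_8_general hp3 i hi F hF x y z hxyz
end

section
/- Let q = p^h with p prime, p > 11, and let n = 3(q-1)/(p^r - 1) where r < h divides h. Let a, b ∈ 𝔽_{p^r} with ab ≠ 0, and suppose p^r ≢ 1 (mod 3). Then the number of projective points (x₀:x₁:x₂) ∈ ℙ²(𝔽_q) satisfying ax₀^n + bx₁^n = x₂^n equals (n²/9)(p^r - 2) + n. -/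
/-!
Write `t = p ^ r`, `q = p ^ h` and `q - 1 = m (t - 1)`, so `n = 3m`. Since `t ≢ 1 (mod 3)`,
`gcd (q - 1, n) = m`, hence in the cyclic group `𝔽_q*` the map `x ↦ x ^ n` has image exactly
`𝔽_t*` and all its fibres have `m` elements. Every value `a x ^ n + b y ^ n` lies in `𝔽_t`, so the
number of `z` with `z ^ n = a x ^ n + b y ^ n` is `1` when that value vanishes and `m` otherwise.
Summing over `(x, y)` counts the affine cone, `1 + (q - 1) m + (q - 1) (m + (q - m) m)` points,
and dividing the nonzero ones by `q - 1` leaves `m (q + 2 - m) = m² (t - 2) + 3m` points.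
-/

open Finset
open scoped LinearAlgebra.Projectivization

theorem IsCyclic.card_pow_eq_of_pow_eq_one {G : Type*} [CommGroup G] [IsCyclic G] [Finite G]
    (k : ℕ) {y : G} (hy : y ^ (Nat.card G / (Nat.card G).gcd k) = 1) :
    Nat.card {x : G // x ^ k = y} = (Nat.card G).gcd k := by
  classical
  have := Fintype.ofFinite G
  set e := Nat.card G / (Nat.card G).gcd k with he
  have he0 : 0 < e :=
    Nat.div_pos (Nat.gcd_le_left _ Nat.card_pos) (Nat.gcd_pos_of_pos_left _ Nat.card_pos)
  -- The image of `x ↦ x ^ k` has `e` elements and lies in the `e`-torsion, which has at most `e`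
  -- elements since `G` is cyclic; so `y` is a `k`-th power and its fibre is a coset of the kernel.
  have hsub : Set.range (· ^ k : G → G) ⊆ {z | z ^ e = 1} := by
    rintro _ ⟨x, rfl⟩
    rw [Set.mem_ofPred_eq, ← pow_mul, he, ← Nat.mul_div_assoc _ (Nat.gcd_dvd_left _ _),
      mul_comm, Nat.mul_div_assoc _ (Nat.gcd_dvd_right _ _), pow_mul, pow_card_eq_one', one_pow]
  have hcard : {z : G | z ^ e = 1}.ncard ≤ (Set.range (· ^ k : G → G)).ncard := by
    calc {z : G | z ^ e = 1}.ncard = #{z : G | z ^ e = 1} := by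
          rw [← Set.ncard_coe_finset]; simp
      _ ≤ e := IsCyclic.card_pow_eq_one_le he0
      _ = (Set.range (· ^ k : G → G)).ncard := by
          rw [he, ← IsCyclic.card_powMonoidHom_range, ← Nat.card_coe_set_eq]; rfl
  obtain ⟨z, rfl⟩ : y ∈ Set.range (· ^ k : G → G) := by
    rw [Set.eq_of_subset_of_ncard_le hsub hcard]; exact hy
  rw [← IsCyclic.card_powMonoidHom_ker G k]
  refine Nat.card_congr (Equiv.subtypeEquiv (Equiv.mulRight z⁻¹) fun x => ?_)
  simp [mul_pow, mul_inv_eq_one]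

theorem FiniteField.card_pow_eq_of_pow_eq_one {F : Type*} [Field F] [Fintype F] {k : ℕ}
    (hk : k ≠ 0) {c : F} (hc : c ≠ 0)
    (h : c ^ ((Fintype.card F - 1) / (Fintype.card F - 1).gcd k) = 1) :
    Nat.card {z : F // z ^ k = c} = (Fintype.card F - 1).gcd k := by
  have hunits : Nat.card Fˣ = Fintype.card F - 1 := by
    rw [Nat.card_units, Nat.card_eq_fintype_card]
  rw [← hunits] at h ⊢
  rw [← IsCyclic.card_pow_eq_of_pow_eq_one k (y := Units.mk0 c hc) (Units.ext (by simpa using h))]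
  refine Nat.card_congr
    { toFun := fun z => ⟨Units.mk0 z.1 fun h0 => hc ?_, Units.ext (by simpa using z.2)⟩
      invFun := fun u => ⟨u.1, by simpa using congrArg Units.val u.2⟩
      left_inv := fun z => rfl
      right_inv := fun u => by ext; rfl }
  rw [← z.2, h0, zero_pow hk]

theorem pow_pred_eq_one_of_pow_eq_self {M : Type*} [MonoidWithZero M] [IsCancelMulZero M]
    {c : M} {t : ℕ} (hc : c ≠ 0) (ht : t ≠ 0) (h : c ^ t = c) : c ^ (t - 1) = 1 := by
  rw [← mul_eq_right₀ hc, ← pow_succ, Nat.sub_add_cancel (Nat.one_le_iff_ne_zero.2 ht), h]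

theorem FiniteField.pow_pow_eq_self_of_dvd {F : Type*} [Field F] [Fintype F] {k t : ℕ}
    (ht : t ≠ 0) (hdvd : Fintype.card F - 1 ∣ k * (t - 1)) (x : F) : (x ^ k) ^ t = x ^ k := by
  rcases eq_or_ne x 0 with rfl | hx
  · rcases eq_or_ne k 0 with rfl | hk <;> simp [*]
  · obtain ⟨e, he⟩ := hdvd
    rw [← Nat.sub_add_cancel (Nat.one_le_iff_ne_zero.2 ht), pow_succ, ← pow_mul, he, pow_mul,
      FiniteField.pow_card_sub_one_eq_one x hx, one_pow, one_mul]

theorem Projectivization.card_subtype_rep_mul_card_units {K V : Type*} [DivisionRing K]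
    [AddCommGroup V] [Module K V] {Q : V → Prop} (hQ : ∀ (u : Kˣ) (v : V), Q (u • v) ↔ Q v) :
    Nat.card {P : ℙ K V // Q P.rep} * Nat.card Kˣ = Nat.card {v : V // v ≠ 0 ∧ Q v} := by
  have hmk : ∀ v : {v : V // v ≠ 0},
      Q v ↔ Q (nonZeroEquivProjectivizationProdUnits K V v).1.rep := by
    intro v
    show Q v ↔ Q (mk K v.1 v.2).rep
    obtain ⟨u, hu⟩ := exists_smul_eq_mk_rep K v.1 v.2
    rw [← hu, hQ]
  rw [← Nat.card_prod]
  exact Nat.card_congr <|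
    ((Equiv.subtypeSubtypeEquivSubtypeInter (· ≠ 0) Q).symm.trans
      (Equiv.subtypeEquiv (nonZeroEquivProjectivizationProdUnits K V) hmk)).trans
      Equiv.prodSubtypeFstEquivSubtypeProd |>.symm

theorem Nat.card_subtype_ne_and_add_one {α : Type*} [Finite α] {Q : α → Prop} {a : α}
    (ha : Q a) :
    Nat.card {x // x ≠ a ∧ Q x} + 1 = Nat.card {x // Q x} := by
  calc Nat.card {x // x ≠ a ∧ Q x} + 1 = ({x | Q x} \ {a}).ncard + 1 := by
        rw [← Nat.card_coe_set_eq]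
        exact congrArg (· + 1) (Nat.card_congr (Equiv.subtypeEquivRight (by simp [and_comm])))
    _ = {x | Q x}.ncard := Set.ncard_sdiff_singleton_add_one ha (Set.toFinite _)
    _ = Nat.card {x // Q x} := Nat.card_coe_set_eq _

theorem Fintype.sum_ite_eq_card_mul_add {α : Type*} [Fintype α] (P : α → Prop) [DecidablePred P]
    (u w : ℕ) :
    ∑ x, (if P x then u else w) =
      Nat.card {x // P x} * u + (Fintype.card α - Nat.card {x // P x}) * w := by
  classical
  rw [Finset.sum_ite, sum_const, sum_const, smul_eq_mul, smul_eq_mul, Finset.filter_not,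
    card_sdiff_of_subset (filter_subset _ _), card_univ, Nat.card_eq_fintype_card,
    Fintype.card_subtype]

theorem card_fin_three_subtype_eq_sum {α : Type*} [Fintype α] (f : α → α → α) (g : α → α) :
    Nat.card {v : Fin 3 → α // f (v 0) (v 1) = g (v 2)} =
      ∑ x, ∑ y, Nat.card {z // g z = f x y} := by
  classical
  let e : {v : Fin 3 → α // f (v 0) (v 1) = g (v 2)} ≃ Σ xy : α × α, {z // g z = f xy.1 xy.2} :=
    { toFun := fun v => ⟨(v.1 0, v.1 1), v.1 2, v.2.symm⟩
      invFun := fun s => ⟨![s.1.1, s.1.2, s.2.1], s.2.2.symm⟩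
      left_inv := fun v => by ext i; fin_cases i <;> rfl
      right_inv := fun s => rfl }
  simp only [Nat.card_congr e, Nat.card_eq_fintype_card, Fintype.card_sigma,
    Fintype.sum_prod_type]

section DiagonalCurve

variable {F : Type*} [Field F] {n m : ℕ} {K : Subfield F} {a b : F}

theorem card_pow_eq_zero (hn : n ≠ 0) : Nat.card {z : F // z ^ n = 0} = 1 := by
  rw [Nat.card_congr (Equiv.subtypeEquivRight fun z => pow_eq_zero_iff hn), Nat.card_unique]

theorem card_pow_eq_ite_of_mem [DecidableEq F] (hn : n ≠ 0)
    (hfib : ∀ c ∈ K, c ≠ 0 → Nat.card {z : F // z ^ n = c} = m) {c : F} (hc : c ∈ K) :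
    Nat.card {z : F // z ^ n = c} = if c = 0 then 1 else m := by
  split_ifs with h0
  · rw [h0, card_pow_eq_zero hn]
  · exact hfib c hc h0

variable [Fintype F]

theorem sum_card_pow_eq_add_mul_pow [DecidableEq F] (hn : n ≠ 0)
    (hfib : ∀ c ∈ K, c ≠ 0 → Nat.card {z : F // z ^ n = c} = m) (hpow : ∀ x : F, x ^ n ∈ K)
    (hb : b ∈ K) (hb0 : b ≠ 0) {c : F} (hc : c ∈ K) :
    ∑ y, Nat.card {z : F // z ^ n = c + b * y ^ n} =
      if c = 0 then 1 + (Fintype.card F - 1) * m else m + (Fintype.card F - m) * m := by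
  have hzero : Nat.card {y : F // c + b * y ^ n = 0} = if c = 0 then 1 else m := by
    calc Nat.card {y : F // c + b * y ^ n = 0} = Nat.card {y : F // y ^ n = -c / b} :=
          Nat.card_congr <| Equiv.subtypeEquivRight fun y => by
            rw [eq_div_iff hb0, add_eq_zero_iff_eq_neg', mul_comm]
      _ = if -c / b = 0 then 1 else m :=
          card_pow_eq_ite_of_mem hn hfib (K.div_mem (K.neg_mem hc) hb)
      _ = if c = 0 then 1 else m := by simp [hb0]
  calc ∑ y, Nat.card {z : F // z ^ n = c + b * y ^ n}
      = ∑ y : F, if c + b * y ^ n = 0 then 1 else m :=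
        sum_congr rfl fun y _ =>
          card_pow_eq_ite_of_mem hn hfib (K.add_mem hc (K.mul_mem hb (hpow y)))
    _ = _ := by
        rw [Fintype.sum_ite_eq_card_mul_add, hzero]
        split_ifs <;> ring

theorem card_affine_diagonal [DecidableEq F] (hn : n ≠ 0)
    (hfib : ∀ c ∈ K, c ≠ 0 → Nat.card {z : F // z ^ n = c} = m) (hpow : ∀ x : F, x ^ n ∈ K)
    (ha : a ∈ K) (ha0 : a ≠ 0) (hb : b ∈ K) (hb0 : b ≠ 0) :
    Nat.card {v : Fin 3 → F // a * v 0 ^ n + b * v 1 ^ n = v 2 ^ n} =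
      1 + (Fintype.card F - 1) * m +
        (Fintype.card F - 1) * (m + (Fintype.card F - m) * m) := by
  rw [card_fin_three_subtype_eq_sum (fun x y => a * x ^ n + b * y ^ n) (· ^ n)]
  calc ∑ x, ∑ y, Nat.card {z : F // z ^ n = a * x ^ n + b * y ^ n}
      = ∑ x : F, if x = 0 then 1 + (Fintype.card F - 1) * m
          else m + (Fintype.card F - m) * m := by
        refine sum_congr rfl fun x _ => ?_
        rw [sum_card_pow_eq_add_mul_pow hn hfib hpow hb hb0 (K.mul_mem ha (hpow x))]
        simp [ha0, hn]
    _ = _ := by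
        rw [Fintype.sum_ite_eq_card_mul_add, Nat.card_unique]
        ring

theorem card_projective_diagonal (hn : n ≠ 0)
    (hfib : ∀ c ∈ K, c ≠ 0 → Nat.card {z : F // z ^ n = c} = m) (hpow : ∀ x : F, x ^ n ∈ K)
    (ha : a ∈ K) (ha0 : a ≠ 0) (hb : b ∈ K) (hb0 : b ≠ 0) :
    Nat.card {P : ℙ F (Fin 3 → F) // a * P.rep 0 ^ n + b * P.rep 1 ^ n = P.rep 2 ^ n} =
      2 * m + (Fintype.card F - m) * m := by
  classical
  let Q : (Fin 3 → F) → Prop := fun v => a * v 0 ^ n + b * v 1 ^ n = v 2 ^ n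
  have hhom (u : Fˣ) (v : Fin 3 → F) : Q (u • v) ↔ Q v := by
    simp only [Q, Pi.smul_apply, Units.smul_def, smul_eq_mul, mul_pow]
    calc _ ↔ (u : F) ^ n * (a * v 0 ^ n + b * v 1 ^ n) = (u : F) ^ n * v 2 ^ n := by
          constructor <;> intro h <;> linear_combination h
      _ ↔ _ := mul_right_inj' (pow_ne_zero n u.ne_zero)
  have hcone := Nat.card_subtype_ne_and_add_one (Q := Q) (a := 0) (by simp [Q, hn])
  rw [← Projectivization.card_subtype_rep_mul_card_units hhom,
    card_affine_diagonal hn hfib hpow ha ha0 hb hb0, Nat.card_units,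
    Nat.card_eq_fintype_card (α := F)] at hcone
  have hq : 0 < Fintype.card F - 1 := Nat.sub_pos_of_lt Fintype.one_lt_card
  exact Nat.eq_of_mul_eq_mul_left hq (by linarith)

end DiagonalCurve

theorem stmt_11_general {p h r : ℕ} (hp : p.Prime) (hrh : r ∣ h)
    {F : Type*} [Field F] [Fintype F] (hF : Fintype.card F = p ^ h)
    (n : ℕ) (hn : n = 3 * (p ^ h - 1) / (p ^ r - 1))
    (a b : F) (hab : a * b ≠ 0)
    (ha : a ^ (p ^ r) = a) (hb : b ^ (p ^ r) = b)
    (hmod : p ^ r % 3 ≠ 1) :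
    Nat.card {P : Projectivization F (Fin 3 → F) //
        a * (P.rep 0) ^ n + b * (P.rep 1) ^ n = (P.rep 2) ^ n} =
      n ^ 2 / 9 * (p ^ r - 2) + n := by
  have : Fact p.Prime := ⟨hp⟩
  have : CharP F p := charP_of_card_eq_prime_pow hF
  have ht : 2 ≤ p ^ r := by have := pow_pos hp.pos r; omega
  have hq : 1 < p ^ h := hF ▸ Fintype.one_lt_card
  obtain ⟨m, hqm⟩ : p ^ r - 1 ∣ p ^ h - 1 := by
    simpa [← pow_mul, Nat.mul_div_cancel' hrh] using Nat.sub_dvd_pow_sub_pow (p ^ r) 1 (h / r)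
  have hm0 : m ≠ 0 := by rintro rfl; omega
  have hnm : n = 3 * m := by rw [hn, hqm, mul_left_comm, Nat.mul_div_cancel_left _ (by omega)]
  have hgcd : (Fintype.card F - 1).gcd n = m := by
    have hcop : (p ^ r - 1).Coprime 3 :=
      ((Nat.Prime.coprime_iff_not_dvd Nat.prime_three).2 (by omega)).symm
    rw [hF, hqm, hnm, mul_comm 3, mul_comm _ m, Nat.gcd_mul_left, hcop, mul_one]
  -- `K` is the subfield `𝔽_{p ^ r}`, the fixed field of `x ↦ x ^ p ^ r`.
  let K := (iterateFrobenius F p r).eqLocusField (RingHom.id F)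
  have hfib (c : F) (hc : c ∈ K) (hc0 : c ≠ 0) : Nat.card {z : F // z ^ n = c} = m := by
    refine hgcd ▸ FiniteField.card_pow_eq_of_pow_eq_one (by omega) hc0 ?_
    rw [hgcd, hF, hqm, Nat.mul_div_cancel _ (Nat.pos_of_ne_zero hm0)]
    exact pow_pred_eq_one_of_pow_eq_self hc0 (by omega) hc
  have hpow (x : F) : x ^ n ∈ K :=
    FiniteField.pow_pow_eq_self_of_dvd (by omega) ⟨3, by rw [hF, hqm, hnm]; ring⟩ x
  rw [card_projective_diagonal (by omega) hfib hpow ha (left_ne_zero_of_mul hab) hb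
    (right_ne_zero_of_mul hab), hF]
  have hsub : p ^ h - m = (p ^ r - 2) * m + 1 := by
    have : (p ^ r - 1) * m = (p ^ r - 2) * m + m := by rw [← Nat.succ_mul]; congr 1; omega
    omega
  rw [hsub, hnm, mul_pow, show 3 ^ 2 * m ^ 2 / 9 = m ^ 2 by omega]
  ring

theorem stmt_11 {p h r : ℕ} (hp : p.Prime) (hp11 : 11 < p)
    (hr : 0 < r) (hrh : r ∣ h) (hrlt : r < h)
    {F : Type*} [Field F] [Fintype F] (hF : Fintype.card F = p ^ h)
    (n : ℕ) (hn : n = 3 * (p ^ h - 1) / (p ^ r - 1))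
    (a b : F) (hab : a * b ≠ 0)
    (ha : a ^ (p ^ r) = a) (hb : b ^ (p ^ r) = b)
    (hmod : p ^ r % 3 ≠ 1) :
    Nat.card {P : Projectivization F (Fin 3 → F) //
        a * (P.rep 0) ^ n + b * (P.rep 1) ^ n = (P.rep 2) ^ n} =
      n ^ 2 / 9 * (p ^ r - 2) + n :=
  stmt_11_general hp hrh hF n hn a b hab ha hb hmod
end

section
/- Let K be an algebraically closed field and a, b ∈ K with ab ≠ 0. Then the affine polynomial a X³ + b Y³ - 1 is irreducible in K[X,Y], provided the characteristic of K is not 3. -/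
/-!
Viewed as a polynomial in `Y` over the integrally closed domain `K[X]`, the curve is
`b • (Y³ - r)` with `r = (1 - a X³) / b`. By Gauss's lemma and the classical criterion for
`Y^p - r`, it is irreducible unless `r` is a cube in the fraction field, hence (integral
closedness) in `K[X]`. But `r` has degree 3 and, since `3 ≠ 0` in `K`, is separable, so it is
squarefree and cannot be a cube.
-/

open MvPolynomial Polynomial.Bivariate

theorem Squarefree.pow_ne_of_not_isUnit {M : Type*} [Monoid M] {x : M} (hx : Squarefree x)
    (hu : ¬IsUnit x) {n : ℕ} (hn : 2 ≤ n) (s : M) : s ^ n ≠ x := by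
  rintro rfl
  have := hx.eq_zero_or_one_of_pow_of_not_isUnit fun hs => hu (hs.pow n)
  omega

theorem natCast_ne_zero_of_ringChar_ne {R : Type*} [Ring R] [Nontrivial R] {p : ℕ}
    (hp : p.Prime) (h : ringChar R ≠ p) : (p : R) ≠ 0 := by
  rw [ne_eq, ringChar.spec]
  intro hdvd
  rcases hp.eq_one_or_self_of_dvd _ hdvd with h1 | h1
  · exact CharP.ringChar_ne_one h1
  · exact h h1

namespace Polynomial

theorem irreducible_X_pow_sub_C_of_forall_pow_ne {R : Type*} [CommRing R] [IsDomain R]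
    [IsIntegrallyClosed R] {p : ℕ} (hp : p.Prime) {r : R} (hr : ∀ s : R, s ^ p ≠ r) :
    Irreducible (X ^ p - C r : R[X]) := by
  rw [(monic_X_pow_sub_C r hp.ne_zero).irreducible_iff_irreducible_map_fraction_map
    (K := FractionRing R)]
  simp only [Polynomial.map_sub, Polynomial.map_pow, map_X, map_C]
  refine X_pow_sub_C_irreducible_of_prime hp fun x hx => ?_
  obtain ⟨s, rfl⟩ := IsIntegrallyClosed.exists_algebraMap_eq_of_isIntegral_pow (R := R)
    hp.pos (hx ▸ isIntegral_algebraMap)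
  exact hr s (IsFractionRing.injective R (FractionRing R) (by rw [map_pow, hx]))

section Field

variable {F : Type*} [Field F] {n : ℕ} {c d : F}

theorem C_sub_C_mul_X_pow_eq (hd : d ≠ 0) :
    (C c - C d * X ^ n : F[X]) = (X ^ n - C (c / d)) * C (-d) := by
  have hcd : C (c / d) * C (-d) = -C c := by
    rw [← C_mul, ← C_neg, div_mul_eq_mul_div, mul_neg, neg_div, mul_div_cancel_right₀ c hd]
  rw [sub_mul, hcd, C_neg]
  ring

theorem separable_C_sub_C_mul_X_pow (hn : (n : F) ≠ 0) (hc : c ≠ 0) (hd : d ≠ 0) :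
    (C c - C d * X ^ n : F[X]).Separable := by
  rw [C_sub_C_mul_X_pow_eq hd]
  exact (separable_X_pow_sub_C _ hn (div_ne_zero hc hd)).mul_unit
    (isUnit_C.mpr (neg_ne_zero.mpr hd).isUnit)

theorem natDegree_C_sub_C_mul_X_pow (hn : n ≠ 0) (hd : d ≠ 0) :
    (C c - C d * X ^ n : F[X]).natDegree = n := by
  rw [natDegree_sub_eq_right_of_natDegree_lt] <;>
    simp [natDegree_C_mul_X_pow n d hd, Nat.pos_of_ne_zero hn]

theorem pow_ne_C_sub_C_mul_X_pow (hn : (n : F) ≠ 0) (hc : c ≠ 0) (hd : d ≠ 0) {m : ℕ}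
    (hm : 2 ≤ m) (s : F[X]) : s ^ m ≠ C c - C d * X ^ n := by
  have hn₀ : n ≠ 0 := by rintro rfl; simp at hn
  refine (separable_C_sub_C_mul_X_pow hn hc hd).squarefree.pow_ne_of_not_isUnit
    (not_isUnit_of_natDegree_pos _ ?_) hm s
  rw [natDegree_C_sub_C_mul_X_pow hn₀ hd]
  exact Nat.pos_of_ne_zero hn₀

end Field

end Polynomial

theorem stmt_19_general {K : Type*} [Field K] (hchar : ringChar K ≠ 3)
    (a b : K) (hab : a * b ≠ 0) :
    Irreducible (C a * X 0 ^ 3 + C b * X 1 ^ 3 - 1 : MvPolynomial (Fin 2) K) := by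
  obtain ⟨ha, hb⟩ := mul_ne_zero_iff.mp hab
  set r : Polynomial K := .C b⁻¹ - .C (b⁻¹ * a) * .X ^ 3
  have hr : ∀ s, s ^ 3 ≠ r := Polynomial.pow_ne_C_sub_C_mul_X_pow
    (natCast_ne_zero_of_ringChar_ne Nat.prime_three hchar) (inv_ne_zero hb)
    (mul_ne_zero (inv_ne_zero hb) ha) (by norm_num)
  have hfactor : equivMvPolynomial K (.C (.C b) * (.X ^ 3 - .C r)) =
      C a * X 0 ^ 3 + C b * X 1 ^ 3 - 1 := by
    have hbb : (C b * C b⁻¹ : MvPolynomial (Fin 2) K) = 1 := by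
      rw [← C_mul, mul_inv_cancel₀ hb, C_1]
    simp only [r, map_mul, map_sub, map_pow, equivMvPolynomial_C_C, equivMvPolynomial_X,
      equivMvPolynomial_C_X]
    linear_combination (C a * X 0 ^ 3 - 1) * hbb
  rw [← hfactor]
  refine (MulEquiv.irreducible_iff (equivMvPolynomial K).toMulEquiv).mpr ?_
  exact (irreducible_isUnit_mul (Polynomial.isUnit_C.mpr (Polynomial.isUnit_C.mpr hb.isUnit))).mpr
    (Polynomial.irreducible_X_pow_sub_C_of_forall_pow_ne Nat.prime_three hr)

theorem stmt_19 {K : Type*} [Field K] [IsAlgClosed K] (hchar : ringChar K ≠ 3)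
    (a b : K) (hab : a * b ≠ 0) :
    Irreducible (C a * X 0 ^ 3 + C b * X 1 ^ 3 - 1 : MvPolynomial (Fin 2) K) :=
  stmt_19_general hchar a b hab
end
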